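/- arXiv:1810.11378 — 4 statements merged into one kernel-verified Lean document; each statement's English description precedes it below -/
import Mathlib

section
/- Let Σ be a d×d symmetric positive definite matrix and D a d×d positive definite diagonal matrix. For any κ ≥ 1, the (κ+1)d × (κ+1)d block matrix Σ_κ with diagonal blocks all equal to Σ and off-diagonal blocks all equal to Σ − D is positive definite if and only if ((κ+1)/κ)·Σ − D is positive definite. -/
/-!
Write `x = (x₀, …, x_κ)` in blocks and `y = ∑ᵢ xᵢ`. Then
`xᵀ Σ_κ x = yᵀ (Σ - D) y + ∑ᵢ xᵢᵀ D xᵢ`, and multiplying by `κ + 1` regroups this as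
`κ · yᵀ T y + ((κ + 1) ∑ᵢ xᵢᵀ D xᵢ - yᵀ D y)` with `T = ((κ+1)/κ) Σ - D`.
The bracket is nonnegative by Jensen's inequality for the convex form `v ↦ vᵀ D v`, and it
vanishes on constant block vectors `xᵢ = v`, for which `y = (κ + 1) v`. So positivity of `T`
on `v` is positivity of `Σ_κ` on the constant vector, and conversely positivity of `T` gives
positivity of `Σ_κ` on every `x` with `y ≠ 0`, while for `y = 0` the bracket alone is positive.
-/

open Matrix

/-- The multi-knockoff joint covariance: a `(κ+1) × (κ+1)` block matrix whose diagonal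
blocks are all `S` and whose off-diagonal blocks are all `S - D`. -/
def knockoffCov {d : ℕ} (κ : ℕ) (S D : Matrix (Fin d) (Fin d) ℝ) :
    Matrix (Fin (κ + 1) × Fin d) (Fin (κ + 1) × Fin d) ℝ :=
  fun p q => if p.1 = q.1 then S p.2 q.2 else (S - D) p.2 q.2

lemma Matrix.PosSemidef.dotProduct_sum_mulVec_sum_le {ι n : Type*} [Fintype ι] [Fintype n]
    {D : Matrix n n ℝ} (hD : D.PosSemidef) (v : ι → n → ℝ) :
    (∑ i, v i) ⬝ᵥ D *ᵥ ∑ i, v i ≤ Fintype.card ι * ∑ i, v i ⬝ᵥ D *ᵥ v i := by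
  set m : ℝ := (Fintype.card ι : ℝ)
  set y := ∑ i, v i
  have hsum : 0 ≤ ∑ i, (m • v i - y) ⬝ᵥ D *ᵥ (m • v i - y) :=
    Finset.sum_nonneg fun i _ => by simpa using hD.dotProduct_mulVec_nonneg (m • v i - y)
  have hexpand : ∑ i, (m • v i - y) ⬝ᵥ D *ᵥ (m • v i - y)
      = m * (m * ∑ i, v i ⬝ᵥ D *ᵥ v i - y ⬝ᵥ D *ᵥ y) := by
    have hleft : ∑ i, v i ⬝ᵥ D *ᵥ y = y ⬝ᵥ D *ᵥ y := (sum_dotProduct _ _ _).symm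
    have hright : ∑ i, y ⬝ᵥ D *ᵥ v i = y ⬝ᵥ D *ᵥ y := by
      rw [← dotProduct_sum, ← mulVec_sum]
    simp only [sub_dotProduct, dotProduct_sub, mulVec_sub, smul_dotProduct, dotProduct_smul,
      mulVec_smul, smul_eq_mul, Finset.sum_sub_distrib, ← Finset.mul_sum, hleft, hright,
      Finset.sum_const, Finset.card_univ, nsmul_eq_mul]
    ring
  rcases isEmpty_or_nonempty ι with hι | hι
  · simp [y]
  · have hm : 0 < m := by positivity
    nlinarith

lemma Matrix.dotProduct_smul_sub_mulVec {n : Type*} [Fintype n] (S D : Matrix n n ℝ) (c : ℝ)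
    (v : n → ℝ) : v ⬝ᵥ (c • S - D) *ᵥ v = c * (v ⬝ᵥ S *ᵥ v) - v ⬝ᵥ D *ᵥ v := by
  simp only [sub_mulVec, smul_mulVec, dotProduct_sub, dotProduct_smul, smul_eq_mul]

section

variable {d κ : ℕ}

lemma knockoffCov_isHermitian {S D : Matrix (Fin d) (Fin d) ℝ} (hS : S.IsHermitian)
    (hD : D.IsHermitian) : (knockoffCov κ S D).IsHermitian := by
  ext ⟨i, a⟩ ⟨j, b⟩
  by_cases h : j = i
  · simpa [knockoffCov, h] using hS.apply a b
  · simpa [knockoffCov, h, Ne.symm h] using (hS.sub hD).apply a b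

lemma knockoffCov_mulVec_apply (S D : Matrix (Fin d) (Fin d) ℝ) (x : Fin (κ + 1) × Fin d → ℝ)
    (i : Fin (κ + 1)) (a : Fin d) :
    (knockoffCov κ S D *ᵥ x) (i, a)
      = ((S - D) *ᵥ ∑ j, Function.curry x j) a + (D *ᵥ Function.curry x i) a := by
  have hsplit : ∀ j b, knockoffCov κ S D (i, a) (j, b)
      = (S - D) a b + if i = j then D a b else 0 := by
    intro j b
    by_cases h : i = j <;> simp [knockoffCov, h]
  simp only [mulVec, dotProduct, Fintype.sum_prod_type, hsplit, add_mul, Finset.sum_add_distrib,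
    ite_mul, zero_mul, Finset.sum_ite_irrel, Finset.sum_const_zero, Finset.sum_ite_eq,
    Finset.mem_univ, if_true, Finset.sum_apply, Finset.mul_sum, Function.curry_apply]
  rw [Finset.sum_comm]

lemma dotProduct_knockoffCov_mulVec (S D : Matrix (Fin d) (Fin d) ℝ)
    (x : Fin (κ + 1) × Fin d → ℝ) :
    x ⬝ᵥ knockoffCov κ S D *ᵥ x
      = (∑ i, Function.curry x i) ⬝ᵥ (S - D) *ᵥ ∑ i, Function.curry x i
        + ∑ i, Function.curry x i ⬝ᵥ D *ᵥ Function.curry x i := by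
  simp only [dotProduct, Fintype.sum_prod_type, knockoffCov_mulVec_apply, mul_add,
    Finset.sum_add_distrib, Finset.sum_apply, Finset.sum_mul, Function.curry_apply]
  rw [Finset.sum_comm]

lemma succ_mul_dotProduct_knockoffCov_mulVec (hκ : 0 < κ) (S D : Matrix (Fin d) (Fin d) ℝ)
    (x : Fin (κ + 1) × Fin d → ℝ) :
    ((κ : ℝ) + 1) * (x ⬝ᵥ knockoffCov κ S D *ᵥ x)
      = κ * ((∑ i, Function.curry x i) ⬝ᵥ ((((κ : ℝ) + 1) / κ) • S - D) *ᵥ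
            ∑ i, Function.curry x i)
        + (((κ : ℝ) + 1) * ∑ i, Function.curry x i ⬝ᵥ D *ᵥ Function.curry x i
            - (∑ i, Function.curry x i) ⬝ᵥ D *ᵥ ∑ i, Function.curry x i) := by
  have hκ' : (κ : ℝ) ≠ 0 := by positivity
  rw [dotProduct_knockoffCov_mulVec, dotProduct_smul_sub_mulVec, sub_mulVec, dotProduct_sub]
  field_simp
  ring

lemma posDef_smul_sub_of_knockoffCov {S D : Matrix (Fin d) (Fin d) ℝ} (hκ : 0 < κ)
    (hS : S.IsHermitian) (hD : D.IsHermitian) (h : (knockoffCov κ S D).PosDef) :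
    ((((κ : ℝ) + 1) / κ) • S - D).PosDef := by
  refine .of_dotProduct_mulVec_pos ((hS.smul (.all _)).sub hD) fun v hv => ?_
  set x : Fin (κ + 1) × Fin d → ℝ := fun p => v p.2
  have hx : x ≠ 0 := fun hx0 => hv (funext fun a => congrFun hx0 (0, a))
  have hcurry : ∀ i, Function.curry x i = v := fun i => rfl
  have hsum : ∑ i, Function.curry x i = ((κ : ℝ) + 1) • v := by
    rw [Finset.sum_congr rfl fun i _ => hcurry i, Finset.sum_const, Finset.card_univ,
      Fintype.card_fin, ← Nat.cast_smul_eq_nsmul ℝ, Nat.cast_succ]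
  have hid := succ_mul_dotProduct_knockoffCov_mulVec hκ S D x
  rw [hsum] at hid
  simp only [hcurry, smul_dotProduct, dotProduct_smul, mulVec_smul, smul_eq_mul,
    Finset.sum_const, Finset.card_univ, Fintype.card_fin, nsmul_eq_mul, Nat.cast_succ] at hid
  have hQ := h.dotProduct_mulVec_pos hx
  rw [star_trivial] at hQ ⊢
  rw [sub_self, add_zero, ← mul_assoc, ← mul_assoc] at hid
  exact pos_of_mul_pos_right (hid ▸ mul_pos (by positivity) hQ) (by positivity)

lemma knockoffCov_posDef {S D : Matrix (Fin d) (Fin d) ℝ} (hκ : 0 < κ) (hS : S.IsHermitian)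
    (hD : D.PosDef) (h : ((((κ : ℝ) + 1) / κ) • S - D).PosDef) :
    (knockoffCov κ S D).PosDef := by
  refine .of_dotProduct_mulVec_pos (knockoffCov_isHermitian hS hD.isHermitian) fun x hx => ?_
  rw [star_trivial]
  have hid := succ_mul_dotProduct_knockoffCov_mulVec hκ S D x
  have hjensen := hD.posSemidef.dotProduct_sum_mulVec_sum_le (Function.curry x)
  rw [Fintype.card_fin, Nat.cast_succ] at hjensen
  set y := ∑ i, Function.curry x i
  suffices hpos : 0 < ((κ : ℝ) + 1) * (x ⬝ᵥ knockoffCov κ S D *ᵥ x) from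
    pos_of_mul_pos_right hpos (by positivity)
  by_cases hy : y = 0
  · obtain ⟨⟨i, a⟩, hia⟩ := Function.ne_iff.mp hx
    have hi : Function.curry x i ≠ 0 := fun hi0 => hia (congrFun hi0 a)
    have hblocks : 0 < ∑ j, Function.curry x j ⬝ᵥ D *ᵥ Function.curry x j :=
      Finset.sum_pos' (fun j _ => by simpa using hD.posSemidef.dotProduct_mulVec_nonneg _)
        ⟨i, Finset.mem_univ _, by simpa using hD.dotProduct_mulVec_pos hi⟩
    rw [hid, hy]
    simp only [zero_dotProduct, mul_zero, zero_add, sub_zero]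
    positivity
  · have hT : 0 < y ⬝ᵥ ((((κ : ℝ) + 1) / κ) • S - D) *ᵥ y := by
      simpa using h.dotProduct_mulVec_pos hy
    have hκ' : (0 : ℝ) < κ := by exact_mod_cast hκ
    rw [hid]
    nlinarith

end

/-- For `Σ` symmetric positive definite and `D` a positive definite diagonal matrix,
the block matrix `Σ_κ` is positive definite iff `((κ+1)/κ) • Σ - D` is. -/
theorem knockoffCov_posDef_iff {d : ℕ} (κ : ℕ) (hκ : 1 ≤ κ)
    (S : Matrix (Fin d) (Fin d) ℝ) (s : Fin d → ℝ)
    (hS : S.PosDef) (hD : (Matrix.diagonal s).PosDef) :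
    (knockoffCov κ S (Matrix.diagonal s)).PosDef
      ↔ ((((κ : ℝ) + 1) / κ) • S - Matrix.diagonal s).PosDef :=
  ⟨posDef_smul_sub_of_knockoffCov hκ hS.isHermitian hD.isHermitian,
    knockoffCov_posDef hκ hS.isHermitian hD⟩
end

section
/- Let X = (X^0, X^1, …, X^κ) be a jointly Gaussian random vector in ℝ^{d(κ+1)} where each X^k ∈ ℝ^d has the same mean μ and the covariance matrix is Σ_κ (all diagonal blocks Σ, all off-diagonal blocks Σ − D with D diagonal). Then for any collection σ = (σ_1,…,σ_d) of permutations of {0,1,…,κ}, the swapped vector [X^0,…,X^κ]_{swap(σ)} has the same distribution as [X^0,…,X^κ]. -/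
/-!
Both the swapped vector and the original one satisfy the defining property of `μ`: every linear
functional `x ↦ ∑ a k i * x k i` is Gaussian with the mean and variance prescribed by `m` and
`Σ_κ`. Composing with the swap replaces `a` by `a k i ↦ a ((σ i)⁻¹ k) i`, which leaves the mean
unchanged because all copies share the mean `m`, and the variance unchanged because the entry of
`Σ_κ` at `((k, i), (l, j))` depends on `k, l` only through `k = l`, and only when `i = j`,
as `D` is diagonal. Since a finite measure on a finite-dimensional space is determined by the
laws of its linear functionals (via the characteristic function), the two laws coincide.
-/

open MeasureTheory ProbabilityTheory

theorem MeasureTheory.Measure.ext_of_map_strongDual {E : Type*} [NormedAddCommGroup E]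
    [NormedSpace ℝ E] [CompleteSpace E] [SecondCountableTopology E] [MeasurableSpace E]
    [BorelSpace E] {μ ν : Measure E} [IsFiniteMeasure μ] [IsFiniteMeasure ν]
    (h : ∀ L : StrongDual ℝ E, μ.map L = ν.map L) : μ = ν :=
  Measure.ext_of_charFunDual <| funext fun L ↦ by
    rw [charFunDual_eq_charFun_map_one, charFunDual_eq_charFun_map_one, h]

theorem StrongDual.apply_pi_pi_eq_sum {ι α R : Type*} [Fintype ι] [Fintype α] [DecidableEq ι]
    [DecidableEq α] [CommSemiring R] [TopologicalSpace R] (L : StrongDual R (ι → α → R))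
    (x : ι → α → R) :
    L x = ∑ k, ∑ i, L (Pi.single k (Pi.single i 1)) * x k i := by
  have hx : x = ∑ k, ∑ i, x k i • Pi.single k (Pi.single i (1 : R)) := by
    ext k i
    simp [Finset.sum_apply, Pi.single_apply, ite_apply]
  conv_lhs => rw [hx]
  simp [map_sum, map_smul, mul_comm]

theorem MeasureTheory.Measure.ext_of_map_sum_mul {ι α : Type*} [Fintype ι] [Fintype α]
    {μ ν : Measure (ι → α → ℝ)} [IsFiniteMeasure μ] [IsFiniteMeasure ν]
    (h : ∀ a : ι → α → ℝ, μ.map (fun x ↦ ∑ k, ∑ i, a k i * x k i)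
      = ν.map (fun x ↦ ∑ k, ∑ i, a k i * x k i)) : μ = ν := by
  classical
  refine Measure.ext_of_map_strongDual fun L ↦ ?_
  rw [funext (StrongDual.apply_pi_pi_eq_sum L), h]

section PermCoords

variable {ι α R : Type*} [Fintype ι] [Fintype α] [NonUnitalNonAssocSemiring R]
  (σ : α → Equiv.Perm ι)

theorem sum_sum_mul_perm_apply (a x : ι → α → R) :
    ∑ k, ∑ i, a k i * x (σ i k) i = ∑ k, ∑ i, a ((σ i).symm k) i * x k i := by
  rw [Finset.sum_comm, Finset.sum_comm (γ := ι)]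
  refine Finset.sum_congr rfl fun i _ ↦ ?_
  rw [← Equiv.sum_comp (σ i) (fun k ↦ a ((σ i).symm k) i * x k i)]
  simp only [Equiv.symm_apply_apply]

theorem sum_quadForm_perm_symm_apply (C : ι × α → ι × α → R)
    (hC : ∀ k i l j, C (σ i k, i) (σ j l, j) = C (k, i) (l, j)) (a : ι → α → R) :
    ∑ k, ∑ i, ∑ l, ∑ j, a ((σ i).symm k) i * C (k, i) (l, j) * a ((σ j).symm l) j
      = ∑ k, ∑ i, ∑ l, ∑ j, a k i * C (k, i) (l, j) * a l j := by
  have hpair : ∀ F : ι → α → ι → α → R, ∑ k, ∑ i, ∑ l, ∑ j, F k i l j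
      = ∑ p : ι × α, ∑ q : ι × α, F p.1 p.2 q.1 q.2 := by
    simp [Fintype.sum_prod_type]
  let e : ι × α ≃ ι × α := Equiv.prodCongrLeft σ
  rw [hpair, hpair, ← e.sum_comp]
  refine Finset.sum_congr rfl fun p _ ↦ ?_
  rw [← e.sum_comp]
  refine Finset.sum_congr rfl fun q _ ↦ ?_
  simp [e, hC]

end PermCoords

theorem knockoffCov_diagonal_perm_apply {d κ : ℕ} (S : Matrix (Fin d) (Fin d) ℝ) (s : Fin d → ℝ)
    (σ : Fin d → Equiv.Perm (Fin (κ + 1))) (k : Fin (κ + 1)) (i : Fin d) (l : Fin (κ + 1))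
    (j : Fin d) :
    knockoffCov κ S (Matrix.diagonal s) (σ i k, i) (σ j l, j)
      = knockoffCov κ S (Matrix.diagonal s) (k, i) (l, j) := by
  rcases eq_or_ne i j with rfl | hij
  · simp [knockoffCov]
  · simp [knockoffCov, hij]

/-- A Gaussian vector `(X⁰, …, X^κ)` with all block means equal to `m` and covariance `Σ_κ`
(diagonal blocks `Σ`, off-diagonal blocks `Σ - D`, `D` diagonal) is invariant in
distribution under any coordinatewise swap `σ = (σ₁, …, σ_d)` of the `κ+1` copies.
Joint Gaussianity is expressed by requiring every linear functional to have a Gaussian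
distribution with the mean and variance induced by `m` and `Σ_κ`. -/
theorem gaussian_multiknockoff_exchangeable
    {d : ℕ} (κ : ℕ) (S : Matrix (Fin d) (Fin d) ℝ) (s : Fin d → ℝ) (m : Fin d → ℝ)
    (μ : Measure (Fin (κ + 1) → Fin d → ℝ)) [IsProbabilityMeasure μ]
    (hGauss : ∀ a : Fin (κ + 1) → Fin d → ℝ,
      Measure.map (fun x => ∑ k, ∑ i, a k i * x k i) μ
        = gaussianReal (∑ k, ∑ i, a k i * m i)
            (Real.toNNReal (∑ k, ∑ i, ∑ l, ∑ j,
              a k i * knockoffCov κ S (Matrix.diagonal s) (k, i) (l, j) * a l j))) :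
    ∀ σ : Fin d → Equiv.Perm (Fin (κ + 1)),
      Measure.map (fun x : Fin (κ + 1) → Fin d → ℝ => fun k i => x (σ i k) i) μ = μ := by
  intro σ
  refine Measure.ext_of_map_sum_mul fun a ↦ ?_
  have hmean := sum_sum_mul_perm_apply σ a fun _ i ↦ m i
  have hlinear : (fun x : Fin (κ + 1) → Fin d → ℝ ↦ ∑ k, ∑ i, a k i * x k i) ∘
      (fun (x : Fin (κ + 1) → Fin d → ℝ) k i ↦ x (σ i k) i)
        = fun x ↦ ∑ k, ∑ i, a ((σ i).symm k) i * x k i :=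
    funext (sum_sum_mul_perm_apply σ a)
  rw [Measure.map_map (by fun_prop) (by fun_prop), hlinear, hGauss, hGauss, ← hmean,
    sum_quadForm_perm_symm_apply σ _ (knockoffCov_diagonal_perm_apply S s σ)]
end

section
/- Selective SeqStep+ FDR control: let p_1,…,p_d ∈ [0,1] be such that the null p-values (p_i)_{i∈H_0} are i.i.d., independent of the non-nulls, and satisfy P(p_i ≤ t) ≤ t for all t. Fix c ∈ (0,1) and q ∈ (0,1), define k̂ = max{k : (1 + #{i ≤ k : p_i > c}) / (#{i ≤ k : p_i ≤ c} ∨ 1) ≤ ((1−c)/c)·q}, and select S = {i ≤ k̂ : p_i ≤ c}. Then E[ |S ∩ H_0| / (|S| ∨ 1) ] ≤ q. -/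
open MeasureTheory ProbabilityTheory

/-- The Selective SeqStep+ stopping index
`k̂ = max {k ≤ d : (1 + #{i ≤ k : pᵢ > c}) / (#{i ≤ k : pᵢ ≤ c} ∨ 1) ≤ ((1-c)/c) q}`,
with `max ∅ = 0`. -/
noncomputable def seqStepK {d : ℕ} (c q : ℝ) (p : Fin d → ℝ) : ℕ :=
  sSup {k : ℕ | k ≤ d ∧
    (1 + ({i : Fin d | (i : ℕ) < k ∧ c < p i}.ncard : ℝ))
      / max ({i : Fin d | (i : ℕ) < k ∧ p i ≤ c}.ncard : ℝ) 1 ≤ ((1 - c) / c) * q}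

/-- The Selective SeqStep+ selection set `S = {i ≤ k̂ : pᵢ ≤ c}`. -/
noncomputable def seqStepSel {d : ℕ} (c q : ℝ) (p : Fin d → ℝ) : Set (Fin d) :=
  {i : Fin d | (i : ℕ) < seqStepK c q p ∧ p i ≤ c}

/-!
Only the bits `[pᵢ ≤ c]` matter, and the null bits are i.i.d. Bernoulli(`ρ`) with
`ρ = ν(-∞, c] ≤ c`, independent of the others. Since `k̂` passes its own test,
`FDP ≤ ((1 - c) / c) q · V⁺(k̂) / (1 + V⁻(k̂))`, where `V⁺(k)`, `V⁻(k)` count the nulls before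
`k` with bit one, resp. zero. Run backwards from `k = d`, `V⁺(k) / (1 + V⁻(k))` is a
supermartingale for the filtration generated by the bits above `k` and the number of ones
below `k` (given these, the null ones below `k` are uniformly placed), and `k̂` is a stopping
time for it. By optional stopping its mean at `k̂` is at most its mean at `d`, which is at most
`ρ / (1 - ρ) ≤ c / (1 - c)`.
-/

namespace SelectiveSeqStep

open Finset

section Combinatorics

variable {α : Type*} {ρ : ℝ}

/-- The probability that independent Bernoulli(`ρ`) bits indexed by `s` equal one exactly on
`A ⊆ s`. -/
noncomputable def bernoulliWeight (ρ : ℝ) (s A : Finset α) : ℝ :=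
  ρ ^ #A * (1 - ρ) ^ (#s - #A)

theorem bernoulliWeight_nonneg (hρ0 : 0 ≤ ρ) (hρ1 : ρ ≤ 1) (s A : Finset α) :
    0 ≤ bernoulliWeight ρ s A :=
  mul_nonneg (pow_nonneg hρ0 _) (pow_nonneg (sub_nonneg.2 hρ1) _)

theorem sum_bernoulliWeight (s : Finset α) :
    ∑ A ∈ s.powerset, bernoulliWeight ρ s A = 1 := by
  simp [bernoulliWeight, sum_pow_mul_eq_add_pow]

variable [DecidableEq α]

theorem sum_powerset_sum_mem_eq {M : Type*} [AddCommMonoid M] (s : Finset α)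
    (f : Finset α → α → M) :
    ∑ A ∈ s.powerset, ∑ y ∈ A, f A y = ∑ C ∈ s.powerset, ∑ y ∈ s \ C, f (insert y C) y := by
  rw [sum_sigma', sum_sigma']
  refine sum_bij' (fun z _ => ⟨z.1.erase z.2, z.2⟩) (fun z _ => ⟨insert z.2 z.1, z.2⟩)
    ?_ ?_ ?_ ?_ ?_
  · rintro ⟨A, y⟩ h
    simp only [mem_sigma, mem_powerset] at h ⊢
    exact ⟨(erase_subset _ _).trans h.1, mem_sdiff.2 ⟨h.1 h.2, notMem_erase _ _⟩⟩
  · rintro ⟨C, y⟩ h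
    simp only [mem_sigma, mem_powerset, mem_sdiff] at h ⊢
    exact ⟨insert_subset h.2.1 h.1, mem_insert_self _ _⟩
  · rintro ⟨A, y⟩ h
    simp only [mem_sigma] at h
    simp [insert_erase h.2]
  · rintro ⟨C, y⟩ h
    simp only [mem_sigma, mem_sdiff] at h
    simp [erase_insert h.2.2]
  · rintro ⟨A, y⟩ h
    simp only [mem_sigma] at h
    simp [insert_erase h.2]

theorem card_filter_insert_erase {p : α → Prop} [DecidablePred p]
    {B : Finset α} {x y : α} (hy : y ∈ B) (hx : x ∉ B) (hpy : p y) (hpx : p x) :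
    #{i ∈ insert x (B.erase y) | p i} = #{i ∈ B | p i} := by
  rw [filter_insert, if_pos hpx, card_insert_of_notMem (by simp [hx]), filter_erase,
    card_erase_add_one (mem_filter.2 ⟨hy, hpy⟩)]

/-- The exchangeability step of the supermartingale property of `nullRatio` below, proved by
double counting the pairs `(C, y)` with `y ∈ C` and `p y`. -/
theorem sum_mul_card_filter_div_le (s : Finset α) (p : α → Prop)
    [DecidablePred p] (g h : Finset α → ℝ) (hh0 : ∀ C ⊆ s, 0 ≤ h C)
    (hgh : ∀ D ⊆ s, ∀ y ∈ s \ D, p y → g (insert y D) = h D) :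
    ∑ C ∈ s.powerset, g C * (#{i ∈ C | p i}
        / ((1 + #{i ∈ s \ C | p i}) * (2 + #{i ∈ s \ C | p i})))
      ≤ ∑ C ∈ s.powerset, h C / (1 + #{i ∈ s \ C | p i}) := by
  set b : Finset α → ℝ := fun C => #{i ∈ s \ C | p i}
  have hb0 : ∀ C, 0 ≤ b C := fun C => Nat.cast_nonneg _
  have hb_insert : ∀ D, ∀ y ∈ s \ D, p y → b (insert y D) + 1 = b D := by
    intro D y hy hpy
    simp only [b, sdiff_insert, filter_erase]
    exact_mod_cast card_erase_add_one (mem_filter.2 ⟨hy, hpy⟩)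
  calc ∑ C ∈ s.powerset, g C * (#{i ∈ C | p i} / ((1 + b C) * (2 + b C)))
      = ∑ C ∈ s.powerset, ∑ y ∈ C, if p y then g C / ((1 + b C) * (2 + b C)) else 0 := by
        refine sum_congr rfl fun C _ => ?_
        rw [← sum_filter, sum_const, nsmul_eq_mul]
        ring
    _ = ∑ D ∈ s.powerset, ∑ y ∈ s \ D,
          if p y then g (insert y D) / ((1 + b (insert y D)) * (2 + b (insert y D))) else 0 :=
        sum_powerset_sum_mem_eq _ _
    _ = ∑ D ∈ s.powerset, b D * (h D / (b D * (1 + b D))) := by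
        refine sum_congr rfl fun D hD => ?_
        rw [← sum_filter, sum_congr rfl fun y hy => ?_, sum_const, nsmul_eq_mul]
        obtain ⟨hy, hpy⟩ := mem_filter.1 hy
        have := hb_insert D y hy hpy
        rw [hgh D (mem_powerset.1 hD) y hy hpy, show 1 + b (insert y D) = b D by linarith,
          show 2 + b (insert y D) = 1 + b D by linarith]
    _ ≤ ∑ C ∈ s.powerset, h C / (1 + b C) := by
        refine sum_le_sum fun D hD => ?_
        rcases eq_or_ne (b D) 0 with h0 | h0
        · simpa [h0] using div_nonneg (hh0 D (mem_powerset.1 hD)) zero_le_one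
        · rw [mul_div_assoc', mul_div_mul_left _ _ h0]

theorem bernoulliWeight_insert_erase {s A : Finset α} {x y : α} (hy : y ∈ A)
    (hx : x ∉ A) :
    bernoulliWeight ρ s (insert x (A.erase y)) = bernoulliWeight ρ s A := by
  rw [bernoulliWeight, card_insert_of_notMem (fun h => hx (mem_of_mem_erase h)),
    card_erase_add_one hy, bernoulliWeight]

theorem one_sub_mul_bernoulliWeight_insert {s C : Finset α} {y : α} (hC : C ⊆ s)
    (hy : y ∈ s \ C) :
    (1 - ρ) * bernoulliWeight ρ s (insert y C) = ρ * bernoulliWeight ρ s C := by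
  have hlt : #C < #s := card_lt_card (ssubset_of_subset_of_ne hC (by grind))
  rw [bernoulliWeight, bernoulliWeight, card_insert_of_notMem (mem_sdiff.1 hy).2,
    show #s - #C = #s - (#C + 1) + 1 by omega, pow_succ, pow_succ]
  ring

theorem sum_bernoulliWeight_mul_card_div_le (hρ0 : 0 ≤ ρ) (hρ1 : ρ < 1)
    (s : Finset α) :
    ∑ A ∈ s.powerset, bernoulliWeight ρ s A * (#A / (1 + #(s \ A))) ≤ ρ / (1 - ρ) := by
  have h1ρ : (1 - ρ) ≠ 0 := by linarith
  calc ∑ A ∈ s.powerset, bernoulliWeight ρ s A * (#A / (1 + #(s \ A)))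
      = ∑ A ∈ s.powerset, ∑ _y ∈ A, bernoulliWeight ρ s A / (1 + #(s \ A)) := by
        simp only [sum_const, nsmul_eq_mul]
        exact sum_congr rfl fun A _ => by ring
    _ = ∑ C ∈ s.powerset, ∑ _y ∈ s \ C, ρ / (1 - ρ) * bernoulliWeight ρ s C / #(s \ C) := by
        rw [sum_powerset_sum_mem_eq]
        refine sum_congr rfl fun C hC => sum_congr rfl fun y hy => ?_
        have hw := one_sub_mul_bernoulliWeight_insert (ρ := ρ) (mem_powerset.1 hC) hy
        have hcard : (1 + #(s \ insert y C) : ℝ) = #(s \ C) := by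
          rw [sdiff_insert, ← card_erase_add_one hy]
          push_cast
          ring
        rw [hcard]
        congr 1
        field_simp
        linarith
    _ ≤ ∑ C ∈ s.powerset, ρ / (1 - ρ) * bernoulliWeight ρ s C := by
        refine sum_le_sum fun C _ => ?_
        have hX : 0 ≤ ρ / (1 - ρ) * bernoulliWeight ρ s C :=
          mul_nonneg (div_nonneg hρ0 (by linarith)) (bernoulliWeight_nonneg hρ0 hρ1.le s C)
        rw [sum_const, nsmul_eq_mul]
        rcases eq_or_ne (#(s \ C) : ℝ) 0 with h | h
        · simpa [h] using hX
        · rw [mul_div_cancel₀ _ h]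
    _ = ρ / (1 - ρ) := by rw [← mul_sum, sum_bernoulliWeight, mul_one]

end Combinatorics

section BackwardMartingale

variable {d : ℕ}

/-- The Barber–Candès process `V⁺(k) / (1 + V⁻(k))` of the null bits `A ⊆ H0`, where `V⁺(k)`
and `V⁻(k)` count the nulls at positions `< k` whose bit is one, resp. zero. -/
noncomputable def nullRatio (H0 A : Finset (Fin d)) (k : ℕ) : ℝ :=
  #{i ∈ A | i.val < k} / (1 + #{i ∈ H0 \ A | i.val < k})

/-- `{T ≤ k}` is invariant under moving a one of `A ⊆ H0` to another null position `≤ k`, i.e.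
it only depends on the bits above `k` and on the number of ones up to `k`. -/
def IsBackwardStoppingTime (H0 : Finset (Fin d)) (T : Finset (Fin d) → ℕ) : Prop :=
  ∀ k, ∀ A ⊆ H0, ∀ y ∈ A, ∀ x ∈ H0 \ A, (y : ℕ) ≤ k → (x : ℕ) ≤ k →
    (T (insert x (A.erase y)) ≤ k ↔ T A ≤ k)

theorem nullRatio_final (H0 A : Finset (Fin d)) :
    nullRatio H0 A d = #A / (1 + #(H0 \ A)) := by
  simp [nullRatio]

theorem card_filter_lt_insert (B : Finset (Fin d)) (x : Fin d) :
    #{i ∈ insert x B | i.val < x.val} = #{i ∈ B | i.val < x.val} := by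
  rw [filter_insert, if_neg (lt_irrefl _)]

theorem card_filter_lt_succ_of_notMem {B : Finset (Fin d)} {x : Fin d} (hx : x ∉ B) :
    #{i ∈ B | i.val < x.val + 1} = #{i ∈ B | i.val < x.val} := by
  congr 1
  refine filter_congr fun i hi => ?_
  have : i ≠ x := ne_of_mem_of_not_mem hi hx
  have : (i : ℕ) ≠ x := fun h => this (Fin.ext h)
  omega

theorem card_filter_lt_succ_insert {B : Finset (Fin d)} {x : Fin d} (hx : x ∉ B) :
    #{i ∈ insert x B | i.val < x.val + 1} = #{i ∈ B | i.val < x.val} + 1 := by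
  rw [filter_insert, if_pos (Nat.lt_succ_self _), card_insert_of_notMem (by simp [hx]),
    card_filter_lt_succ_of_notMem hx]

theorem nullRatio_sub_nullRatio_succ {s C : Finset (Fin d)} {x : Fin d} (hxs : x ∉ s)
    (hC : C ⊆ s) :
    nullRatio (insert x s) C x - nullRatio (insert x s) C (x + 1)
      = #{i ∈ C | i.val < x.val} / ((1 + #{i ∈ s \ C | i.val < x.val})
          * (2 + #{i ∈ s \ C | i.val < x.val})) := by
  have hxC : x ∉ C := fun h => hxs (hC h)
  rw [nullRatio, nullRatio, insert_sdiff_of_notMem _ hxC, card_filter_lt_insert,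
    card_filter_lt_succ_insert (fun h => hxs (mem_sdiff.1 h).1),
    card_filter_lt_succ_of_notMem hxC]
  field_simp
  push_cast
  ring

theorem nullRatio_insert_sub_nullRatio_succ {s C : Finset (Fin d)} {x : Fin d} (hxs : x ∉ s)
    (hC : C ⊆ s) :
    nullRatio (insert x s) (insert x C) x - nullRatio (insert x s) (insert x C) (x + 1)
      = -1 / (1 + #{i ∈ s \ C | i.val < x.val}) := by
  rw [nullRatio, nullRatio, insert_sdiff_insert, sdiff_insert_of_notMem hxs,
    card_filter_lt_insert, card_filter_lt_succ_insert (fun h => hxs (hC h)),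
    card_filter_lt_succ_of_notMem (fun h => hxs (mem_sdiff.1 h).1)]
  field_simp
  push_cast
  ring

theorem sum_mul_nullRatio_sub_nullRatio_succ_nonpos (H0 : Finset (Fin d)) (k : ℕ)
    (g : Finset (Fin d) → ℝ) (hg0 : ∀ A ⊆ H0, 0 ≤ g A)
    (hg : ∀ A ⊆ H0, ∀ y ∈ A, ∀ x ∈ H0 \ A, (y : ℕ) < k → (x : ℕ) = k →
      g (insert x (A.erase y)) = g A) :
    ∑ A ∈ H0.powerset, g A * (nullRatio H0 A k - nullRatio H0 A (k + 1)) ≤ 0 := by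
  by_cases hk : ∃ x ∈ H0, (x : ℕ) = k
  swap
  · push Not at hk
    refine (sum_eq_zero fun A hA => ?_).le
    have hsucc : ∀ B ⊆ H0, #{i ∈ B | i.val < k + 1} = #{i ∈ B | i.val < k} := fun B hB =>
      congrArg card (filter_congr fun i hi => by have := hk i (hB hi); omega)
    rw [nullRatio, nullRatio, hsucc A (mem_powerset.1 hA), hsucc (H0 \ A) sdiff_subset,
      sub_self, mul_zero]
  obtain ⟨x, hxH, rfl⟩ := hk
  obtain ⟨s, hxs, rfl⟩ : ∃ s, x ∉ s ∧ H0 = insert x s :=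
    ⟨H0.erase x, notMem_erase x H0, (insert_erase hxH).symm⟩
  have hswap : ∀ D ⊆ s, ∀ y ∈ s \ D, (y : ℕ) < x → g (insert y D) = g (insert x D) := by
    intro D hD y hy hyx
    obtain ⟨hys, hyD⟩ := mem_sdiff.1 hy
    have hxyD : x ∈ insert x s \ insert y D := mem_sdiff.2 ⟨mem_insert_self x s, by
      simp only [mem_insert, not_or]; exact ⟨fun h => (h ▸ hxs) hys, fun h => hxs (hD h)⟩⟩
    have := hg (insert y D) (insert_subset (mem_insert_of_mem hys) (hD.trans (subset_insert _ _)))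
      y (mem_insert_self y D) x hxyD hyx rfl
    rwa [erase_insert hyD, eq_comm] at this
  have hexch := sum_mul_card_filter_div_le s (fun i => i.val < x.val) g (fun C => g (insert x C))
    (fun C hC => hg0 _ (insert_subset_insert x hC)) hswap
  rw [sum_powerset_insert hxs, ← sum_add_distrib, sum_congr rfl fun C hC => by
    rw [nullRatio_sub_nullRatio_succ hxs (mem_powerset.1 hC),
      nullRatio_insert_sub_nullRatio_succ hxs (mem_powerset.1 hC), neg_div, mul_neg,
      mul_one_div, ← sub_eq_add_neg], sum_sub_distrib]
  linarith

theorem eq_add_sum_ite_sub {G : Type*} [AddCommGroup G] (f : ℕ → G) {T n : ℕ} (hT : T ≤ n) :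
    f T = f n + ∑ k ∈ range n, if T ≤ k then f k - f (k + 1) else 0 := by
  rw [← sum_filter, show {k ∈ range n | T ≤ k} = Ico T n by ext; simp; omega]
  have hneg : ∑ k ∈ Ico T n, (f k - f (k + 1)) = -∑ k ∈ Ico T n, (f (k + 1) - f k) := by
    rw [← sum_neg_distrib]
    simp
  rw [hneg, sum_Ico_sub f hT]
  abel

/-- Optional stopping for the backward supermartingale `nullRatio`. -/
theorem sum_bernoulliWeight_mul_nullRatio_le {ρ : ℝ} (hρ0 : 0 ≤ ρ) (hρ1 : ρ < 1)
    (H0 : Finset (Fin d)) {T : Finset (Fin d) → ℕ} (hTd : ∀ A, T A ≤ d)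
    (hT : IsBackwardStoppingTime H0 T) :
    ∑ A ∈ H0.powerset, bernoulliWeight ρ H0 A * nullRatio H0 A (T A) ≤ ρ / (1 - ρ) := by
  have hstep : ∀ k ∈ range d, ∑ A ∈ H0.powerset, (bernoulliWeight ρ H0 A * if T A ≤ k then 1 else 0)
      * (nullRatio H0 A k - nullRatio H0 A (k + 1)) ≤ 0 := by
    intro k _
    refine sum_mul_nullRatio_sub_nullRatio_succ_nonpos H0 k _ (fun A _ => ?_)
      (fun A hA y hy x hx hyk hxk => ?_)
    · exact mul_nonneg (bernoulliWeight_nonneg hρ0 hρ1.le _ _) (by split_ifs <;> norm_num)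
    · rw [bernoulliWeight_insert_erase hy (mem_sdiff.1 hx).2,
        if_congr (hT k A hA y hy x hx hyk.le hxk.le) rfl rfl]
  calc ∑ A ∈ H0.powerset, bernoulliWeight ρ H0 A * nullRatio H0 A (T A)
      = ∑ A ∈ H0.powerset, bernoulliWeight ρ H0 A * (#A / (1 + #(H0 \ A)))
        + ∑ k ∈ range d, ∑ A ∈ H0.powerset, (bernoulliWeight ρ H0 A * if T A ≤ k then 1 else 0)
            * (nullRatio H0 A k - nullRatio H0 A (k + 1)) := by
        rw [sum_comm, ← sum_add_distrib]
        refine sum_congr rfl fun A _ => ?_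
        rw [eq_add_sum_ite_sub (nullRatio H0 A) (hTd A), nullRatio_final, mul_add, mul_sum]
        congr 1
        refine sum_congr rfl fun k _ => ?_
        split_ifs <;> ring
    _ ≤ ρ / (1 - ρ) + 0 :=
        add_le_add (sum_bernoulliWeight_mul_card_div_le hρ0 hρ1 H0) (sum_nonpos hstep)
    _ = ρ / (1 - ρ) := add_zero _

end BackwardMartingale

section SeqStep

noncomputable def fdp {α : Type*} [DecidableEq α] (H0 S : Finset α) : ℝ :=
  #(S ∩ H0) / max (#S : ℝ) 1

variable {d : ℕ} {c q : ℝ}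

/-- `seqStepK` as a function of the set `B = {i | pᵢ ≤ c}`. -/
noncomputable def stopIdx (c q : ℝ) (B : Finset (Fin d)) : ℕ :=
  sSup {k | k ≤ d ∧
    (1 + #{i ∈ Bᶜ | i.val < k} : ℝ) / max (#{i ∈ B | i.val < k} : ℝ) 1 ≤ (1 - c) / c * q}

noncomputable def selection (c q : ℝ) (B : Finset (Fin d)) : Finset (Fin d) :=
  {i ∈ B | i.val < stopIdx c q B}

theorem stopIdx_le_iff {B : Finset (Fin d)} {k : ℕ} :
    stopIdx c q B ≤ k ↔ ∀ j, k < j → j ≤ d →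
      (1 - c) / c * q < (1 + #{i ∈ Bᶜ | i.val < j} : ℝ) / max (#{i ∈ B | i.val < j} : ℝ) 1 := by
  rw [stopIdx, csSup_le_iff' ⟨d, fun _ h => h.1⟩]
  refine forall_congr' fun j => ?_
  simp only [Set.mem_ofPred_eq, and_imp, ← not_le]
  tauto

theorem stopIdx_le (c q : ℝ) (B : Finset (Fin d)) : stopIdx c q B ≤ d :=
  stopIdx_le_iff.2 fun _ h h' => absurd h' (not_le.2 h)

theorem stopIdx_insert_erase_le_iff {B : Finset (Fin d)} {x y : Fin d} {k : ℕ} (hy : y ∈ B)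
    (hx : x ∉ B) (hyk : y.val ≤ k) (hxk : x.val ≤ k) :
    stopIdx c q (insert x (B.erase y)) ≤ k ↔ stopIdx c q B ≤ k := by
  have hxy : x ≠ y := fun h => hx (h ▸ hy)
  rw [stopIdx_le_iff, stopIdx_le_iff, compl_insert, compl_erase, erase_insert_of_ne hxy.symm]
  refine forall₂_congr fun j hj => ?_
  rw [card_filter_insert_erase hy hx (by omega) (by omega),
    card_filter_insert_erase (mem_compl.2 hx) (by simpa using hy) (by omega) (by omega)]

theorem fdp_selection_le (H0 B : Finset (Fin d)) :
    fdp H0 (selection c q B) ≤ (1 - c) / c * q * nullRatio H0 (B ∩ H0) (stopIdx c q B) := by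
  set K := stopIdx c q B
  have hsel : selection c q B ∩ H0 = {i ∈ B ∩ H0 | i.val < K} := by
    ext i
    simp only [selection, mem_inter, mem_filter]
    tauto
  have hW : #{i ∈ H0 \ (B ∩ H0) | i.val < K} ≤ #{i ∈ Bᶜ | i.val < K} :=
    card_le_card fun i => by simp only [mem_filter, mem_sdiff, mem_inter, mem_compl]; tauto
  rw [fdp, nullRatio, hsel]
  set V : ℝ := ((#{i ∈ B ∩ H0 | i.val < K} : ℕ) : ℝ)
  set W : ℝ := ((#{i ∈ H0 \ (B ∩ H0) | i.val < K} : ℕ) : ℝ)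
  set R : ℝ := ((#(selection c q B) : ℕ) : ℝ)
  rcases Nat.eq_zero_or_pos K with hK0 | hKpos
  · simp [V, hK0]
  have hK : (1 + #{i ∈ Bᶜ | i.val < K} : ℝ) / max R 1 ≤ (1 - c) / c * q :=
    let ⟨_, hj, _⟩ := exists_lt_of_lt_csSup' hKpos
    (Nat.sSup_mem ⟨_, hj⟩ ⟨d, fun _ h => h.1⟩).2
  have hV : 0 ≤ V / (1 + W) := by positivity
  have hW0 : 0 < 1 + W := by positivity
  calc V / max R 1 = V / (1 + W) * ((1 + W) / max R 1) := by field_simp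
    _ ≤ V / (1 + W) * ((1 + #{i ∈ Bᶜ | i.val < K}) / max R 1) := by
        gcongr
        exact Nat.cast_le.2 hW
    _ ≤ V / (1 + W) * ((1 - c) / c * q) := by gcongr
    _ = (1 - c) / c * q * (V / (1 + W)) := mul_comm _ _

theorem isBackwardStoppingTime_stopIdx_union {H0 Γ : Finset (Fin d)} (hΓ : Disjoint H0 Γ) :
    IsBackwardStoppingTime H0 fun A => stopIdx c q (A ∪ Γ) := by
  intro k A hA y hy x hx hyk hxk
  have hyΓ : y ∉ Γ := disjoint_left.1 hΓ (hA hy)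
  have hxΓ : x ∉ Γ := disjoint_left.1 hΓ (mem_sdiff.1 hx).1
  have hxA : x ∉ A := (mem_sdiff.1 hx).2
  dsimp only
  rw [show insert x (A.erase y) ∪ Γ = insert x ((A ∪ Γ).erase y) by
    ext i; simp only [mem_insert, mem_union, mem_erase]; grind]
  exact stopIdx_insert_erase_le_iff (mem_union_left _ hy) (by simp [hxA, hxΓ]) hyk hxk

theorem sum_bernoulliWeight_mul_fdp_le (hc0 : 0 < c) (hc1 : c < 1) (hq0 : 0 < q) {ρ : ℝ}
    (hρ0 : 0 ≤ ρ) (hρc : ρ ≤ c) {H0 Γ : Finset (Fin d)} (hΓ : Disjoint H0 Γ) :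
    ∑ A ∈ H0.powerset, bernoulliWeight ρ H0 A * fdp H0 (selection c q (A ∪ Γ)) ≤ q := by
  have hρ1 : ρ < 1 := hρc.trans_lt hc1
  have hc1' : 0 < 1 - c := sub_pos.2 hc1
  have hcoef : 0 ≤ (1 - c) / c * q := by positivity
  calc ∑ A ∈ H0.powerset, bernoulliWeight ρ H0 A * fdp H0 (selection c q (A ∪ Γ))
      ≤ ∑ A ∈ H0.powerset, bernoulliWeight ρ H0 A
          * ((1 - c) / c * q * nullRatio H0 A (stopIdx c q (A ∪ Γ))) := by
        refine sum_le_sum fun A hA => mul_le_mul_of_nonneg_left ?_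
          (bernoulliWeight_nonneg hρ0 hρ1.le _ _)
        have hAH : (A ∪ Γ) ∩ H0 = A := by
          have := mem_powerset.1 hA
          ext i; simp only [mem_inter, mem_union]
          have : i ∈ H0 → i ∉ Γ := fun h => disjoint_left.1 hΓ h
          grind
        simpa only [hAH] using fdp_selection_le H0 (A ∪ Γ)
    _ = (1 - c) / c * q * ∑ A ∈ H0.powerset,
          bernoulliWeight ρ H0 A * nullRatio H0 A (stopIdx c q (A ∪ Γ)) := by
        rw [mul_sum]
        exact sum_congr rfl fun A _ => by ring
    _ ≤ (1 - c) / c * q * (ρ / (1 - ρ)) :=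
        mul_le_mul_of_nonneg_left (sum_bernoulliWeight_mul_nullRatio_le hρ0 hρ1 H0
          (fun A => stopIdx_le c q _) (isBackwardStoppingTime_stopIdx_union hΓ)) hcoef
    _ ≤ (1 - c) / c * q * (c / (1 - c)) := by
        gcongr
    _ = q := by field_simp

theorem seqStepK_eq_stopIdx (c q : ℝ) (x : Fin d → ℝ) :
    seqStepK c q x = stopIdx c q {i | x i ≤ c} := by
  unfold seqStepK stopIdx
  congr 1
  ext k
  have habove : {i : Fin d | (i : ℕ) < k ∧ c < x i}.ncard
      = #{i ∈ ({i | x i ≤ c} : Finset (Fin d))ᶜ | i.val < k} := by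
    rw [← Set.ncard_coe_finset]
    congr 1
    ext i
    simp [and_comm]
  have hbelow : {i : Fin d | (i : ℕ) < k ∧ x i ≤ c}.ncard
      = #{i ∈ ({i | x i ≤ c} : Finset (Fin d)) | i.val < k} := by
    rw [← Set.ncard_coe_finset]
    congr 1
    ext i
    simp [and_comm]
  rw [Set.mem_ofPred_eq, Set.mem_ofPred_eq, habove, hbelow]

theorem seqStepSel_eq_selection (c q : ℝ) (x : Fin d → ℝ) :
    seqStepSel c q x = selection c q {i | x i ≤ c} := by
  ext i
  simp [seqStepSel, selection, seqStepK_eq_stopIdx, and_comm]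

theorem fdp_seqStepSel (c q : ℝ) (H0 : Finset (Fin d)) (x : Fin d → ℝ) :
    ((seqStepSel c q x ∩ (H0 : Set (Fin d))).ncard : ℝ) / max ((seqStepSel c q x).ncard : ℝ) 1
      = fdp H0 (selection c q {i | x i ≤ c}) := by
  rw [seqStepSel_eq_selection, ← coe_inter, Set.ncard_coe_finset, Set.ncard_coe_finset, fdp]

theorem norm_fdp_le_one {α : Type*} [DecidableEq α] (H0 S : Finset α) : ‖fdp H0 S‖ ≤ 1 := by
  rw [Real.norm_of_nonneg (by unfold fdp; positivity)]
  exact div_le_one_of_le₀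
    ((Nat.cast_le.2 (card_le_card inter_subset_left)).trans (le_max_left _ _)) (by positivity)

end SeqStep

section Probability

variable {d : ℕ} {c q : ℝ}

theorem measurable_comp_finset {X ι β : Type*} [MeasurableSpace X] [MeasurableSpace β]
    [Fintype ι] {S : X → Finset ι} (hS : ∀ i, Measurable fun x => i ∈ S x) (f : Finset ι → β) :
    Measurable fun x => f (S x) := by
  classical
  have := (Measurable.of_discrete (f := fun P : ι → Prop => f {i | P i})).comp
    (measurable_pi_lambda _ hS)
  convert this using 1
  funext x
  simp

theorem integral_pi_eq_sum_bernoulliWeight {κ : Type*} [Fintype κ] [DecidableEq κ]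
    (ν : Measure ℝ) [IsProbabilityMeasure ν] (c : ℝ) (f : Finset κ → ℝ) :
    ∫ u, f {i | u i ≤ c} ∂(Measure.pi fun _ : κ => ν)
      = ∑ A : Finset κ, bernoulliWeight (ν.real (Set.Iic c)) univ A * f A := by
  let cell : Finset κ → Set (κ → ℝ) := fun A =>
    Set.univ.pi fun i => if i ∈ A then Set.Iic c else (Set.Iic c)ᶜ
  have hcell : ∀ A u, u ∈ cell A ↔ ({i | u i ≤ c} : Finset κ) = A := by
    intro A u
    simp only [cell, Set.mem_univ_pi, Finset.ext_iff, mem_filter, mem_univ, true_and]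
    refine forall_congr' fun i => ?_
    split_ifs with h <;> simp [h]
  have hmeas : ∀ A, MeasurableSet (cell A) := fun A =>
    MeasurableSet.univ_pi fun i => by
      split_ifs
      exacts [measurableSet_Iic, measurableSet_Iic.compl]
  have hdecomp :
      (fun u => f {i | u i ≤ c}) = fun u => ∑ A, (cell A).indicator (fun _ => f A) u := by
    funext u
    rw [sum_eq_single ({i | u i ≤ c} : Finset κ) (fun A _ hA => Set.indicator_of_notMem
      (fun h => hA ((hcell A u).1 h).symm) _) (by simp),
      Set.indicator_of_mem ((hcell _ u).2 rfl)]
  rw [hdecomp, integral_finsetSum _ fun A _ => (integrable_const _).indicator (hmeas A)]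
  refine sum_congr rfl fun A _ => ?_
  rw [integral_indicator_const _ (hmeas A), smul_eq_mul, measureReal_def, Measure.pi_pi,
    ENNReal.toReal_prod]
  have hfactor : ∀ i, (ν (if i ∈ A then Set.Iic c else (Set.Iic c)ᶜ)).toReal
      = if i ∈ A then ν.real (Set.Iic c) else 1 - ν.real (Set.Iic c) := by
    intro i
    split_ifs
    · rfl
    · rw [← measureReal_def, measureReal_compl measurableSet_Iic, probReal_univ]
  simp only [hfactor]
  rw [prod_ite, prod_const, prod_const, bernoulliWeight, filter_mem_eq_inter, univ_inter,
    filter_not, filter_mem_eq_inter, univ_inter, card_univ_sdiff, card_univ]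

theorem sum_finset_subtype_eq_sum_powerset {ι M : Type*} [DecidableEq ι] [AddCommMonoid M]
    (s : Finset ι) (G : Finset ι → M) : ∑ A : Finset s, G (A.image Subtype.val) = ∑ A ∈ s.powerset, G A := by
  conv_rhs => rw [← attach_image_val (s := s), powerset_image]
  rw [sum_image fun A _ B _ h => image_injective Subtype.val_injective h, ← powerset_univ,
    univ_eq_attach]

section Parts

variable {ι : Type*} [Fintype ι] [DecidableEq ι]

/-- The set `{i | xᵢ ≤ c}`, for `x` given by its restrictions `u` to `s` and `v` to `sᶜ`. -/
noncomputable def setBelowOfParts (c : ℝ) (s : Finset ι) (u : s → ℝ) (v : {i // i ∉ s} → ℝ) :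
    Finset ι :=
  ({j | u j ≤ c} : Finset s).image Subtype.val
    ∪ ({j | v j ≤ c} : Finset {i // i ∉ s}).image Subtype.val

theorem setBelowOfParts_restrict (c : ℝ) (s : Finset ι) (x : ι → ℝ) :
    setBelowOfParts c s (fun i : s => x i) (fun i : {i // i ∉ s} => x i)
      = ({i | x i ≤ c} : Finset ι) := by
  ext i
  by_cases h : i ∈ s <;> simp [setBelowOfParts, h]

theorem measurable_mem_setBelowOfParts (c : ℝ) (s : Finset ι) (i : ι) :
    Measurable fun z : (s → ℝ) × ({i // i ∉ s} → ℝ) => i ∈ setBelowOfParts c s z.1 z.2 := by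
  by_cases h : i ∈ s
  · have : (fun z : (s → ℝ) × ({i // i ∉ s} → ℝ) => i ∈ setBelowOfParts c s z.1 z.2)
        = fun z => z.1 ⟨i, h⟩ ≤ c := by
      ext z
      simp [setBelowOfParts, h]
    rw [this]
    exact measurableSet_setOfPred.1
      (measurableSet_Iic.preimage ((measurable_pi_apply _).comp measurable_fst))
  · have : (fun z : (s → ℝ) × ({i // i ∉ s} → ℝ) => i ∈ setBelowOfParts c s z.1 z.2)
        = fun z => z.2 ⟨i, h⟩ ≤ c := by
      ext z
      simp [setBelowOfParts, h]
    rw [this]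
    exact measurableSet_setOfPred.1
      (measurableSet_Iic.preimage ((measurable_pi_apply _).comp measurable_snd))

end Parts

theorem measurable_fdp_selection_setBelowOfParts (c q : ℝ) (H0 : Finset (Fin d)) :
    Measurable fun z : (H0 → ℝ) × ({i // i ∉ H0} → ℝ) =>
      fdp H0 (selection c q (setBelowOfParts c H0 z.1 z.2)) :=
  measurable_comp_finset (measurable_mem_setBelowOfParts c H0) fun B => fdp H0 (selection c q B)

theorem integral_fdp_selection_le (hc0 : 0 < c) (hc1 : c < 1) (hq0 : 0 < q)
    (H0 : Finset (Fin d)) (ν : Measure ℝ) [IsProbabilityMeasure ν]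
    (hν : ν (Set.Iic c) ≤ ENNReal.ofReal c) (v : {i // i ∉ H0} → ℝ) :
    ∫ u, fdp H0 (selection c q (setBelowOfParts c H0 u v)) ∂(Measure.pi fun _ : H0 => ν)
      ≤ q := by
  set Γ := ({j | v j ≤ c} : Finset {i // i ∉ H0}).image Subtype.val
  have hΓ : Disjoint H0 Γ := disjoint_left.2 fun i hi h => by
    obtain ⟨j, -, rfl⟩ := mem_image.1 h
    exact j.2 hi
  calc ∫ u, fdp H0 (selection c q (setBelowOfParts c H0 u v)) ∂(Measure.pi fun _ : H0 => ν)
      = ∑ A : Finset H0, bernoulliWeight (ν.real (Set.Iic c)) univ A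
          * fdp H0 (selection c q (A.image Subtype.val ∪ Γ)) :=
        integral_pi_eq_sum_bernoulliWeight ν c fun A =>
          fdp H0 (selection c q (A.image Subtype.val ∪ Γ))
    _ = ∑ A ∈ H0.powerset, bernoulliWeight (ν.real (Set.Iic c)) H0 A
          * fdp H0 (selection c q (A ∪ Γ)) := by
        rw [← sum_finset_subtype_eq_sum_powerset]
        refine sum_congr rfl fun A _ => ?_
        rw [bernoulliWeight, bernoulliWeight, card_univ, Fintype.card_coe,
          card_image_of_injective _ Subtype.val_injective]
    _ ≤ q := sum_bernoulliWeight_mul_fdp_le hc0 hc1 hq0 measureReal_nonneg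
        (ENNReal.toReal_le_of_le_ofReal hc0.le hν) hΓ

end Probability

end SelectiveSeqStep

open SelectiveSeqStep

theorem selective_seqstep_fdr_control_general
    {Ω : Type*} [MeasurableSpace Ω] (P : Measure Ω) [IsProbabilityMeasure P]
    {d : ℕ} (c q : ℝ) (hc0 : 0 < c) (hc1 : c < 1) (hq0 : 0 < q)
    (p : Ω → Fin d → ℝ) (hp : Measurable p)
    (H0 : Finset (Fin d))
    (ν : Measure ℝ) [IsProbabilityMeasure ν]
    (hν : ∀ t : ℝ, ν (Set.Iic t) ≤ ENNReal.ofReal t)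
    (hindep : Measure.map (fun ω =>
        ((fun i : H0 => p ω i), (fun i : {i : Fin d // i ∉ H0} => p ω i))) P
      = (Measure.pi fun _ : H0 => ν).prod
          (Measure.map (fun ω => fun i : {i : Fin d // i ∉ H0} => p ω i) P)) :
    ∫ ω, ((seqStepSel c q (p ω) ∩ (H0 : Set (Fin d))).ncard : ℝ)
        / max ((seqStepSel c q (p ω)).ncard : ℝ) 1 ∂P ≤ q := by
  set Q := Measure.map (fun ω (i : {i // i ∉ H0}) => p ω i) P
  set F := fun z : (H0 → ℝ) × ({i // i ∉ H0} → ℝ) =>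
    fdp H0 (selection c q (setBelowOfParts c H0 z.1 z.2))
  have hnull : Measurable fun ω (i : H0) => p ω i :=
    measurable_pi_lambda _ fun i => (measurable_pi_apply _).comp hp
  have hnonnull : Measurable fun ω (i : {i // i ∉ H0}) => p ω i :=
    measurable_pi_lambda _ fun i => (measurable_pi_apply _).comp hp
  have : IsProbabilityMeasure Q := Measure.isProbabilityMeasure_map hnonnull.aemeasurable
  have hF := measurable_fdp_selection_setBelowOfParts c q H0
  have hFint : Integrable F ((Measure.pi fun _ : H0 => ν).prod Q) :=
    .of_bound hF.aestronglyMeasurable 1 (ae_of_all _ fun _ => norm_fdp_le_one _ _)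
  calc _ = ∫ ω, F ((fun i : H0 => p ω i), (fun i : {i // i ∉ H0} => p ω i)) ∂P := by
        refine integral_congr_ae (ae_of_all _ fun ω => ?_)
        simp only [F]
        rw [fdp_seqStepSel, setBelowOfParts_restrict]
    _ = ∫ z, F z ∂((Measure.pi fun _ : H0 => ν).prod Q) := by
        rw [← hindep, integral_map (hnull.prodMk hnonnull).aemeasurable hF.aestronglyMeasurable]
    _ = ∫ v, ∫ u, F (u, v) ∂(Measure.pi fun _ : H0 => ν) ∂Q := integral_prod_symm F hFint
    _ ≤ ∫ _, q ∂Q := integral_mono hFint.integral_prod_right (integrable_const q)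
          fun v => integral_fdp_selection_le hc0 hc1 hq0 H0 ν (hν c) v
    _ = q := by simp

/-- Selective SeqStep+ FDR control (Barber–Candès): if the null p-values are i.i.d. with
common law `ν` satisfying `ν(-∞, t] ≤ t`, independent of the non-null p-values, then the
procedure selecting `S = {i ≤ k̂ : pᵢ ≤ c}` controls the FDR at level `q`. -/
theorem selective_seqstep_fdr_control
    {Ω : Type*} [MeasurableSpace Ω] (P : Measure Ω) [IsProbabilityMeasure P]
    {d : ℕ} (c q : ℝ) (hc0 : 0 < c) (hc1 : c < 1) (hq0 : 0 < q) (hq1 : q < 1)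
    (p : Ω → Fin d → ℝ) (hp : Measurable p)
    (hrange : ∀ ω, ∀ i, p ω i ∈ Set.Icc (0 : ℝ) 1)
    (H0 : Finset (Fin d))
    (ν : Measure ℝ) [IsProbabilityMeasure ν]
    (hν : ∀ t : ℝ, ν (Set.Iic t) ≤ ENNReal.ofReal t)
    (hindep : Measure.map (fun ω =>
        ((fun i : H0 => p ω i), (fun i : {i : Fin d // i ∉ H0} => p ω i))) P
      = (Measure.pi fun _ : H0 => ν).prod
          (Measure.map (fun ω => fun i : {i : Fin d // i ∉ H0} => p ω i) P)) :
    ∫ ω, ((seqStepSel c q (p ω) ∩ (H0 : Set (Fin d))).ncard : ℝ)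
        / max ((seqStepSel c q (p ω)).ncard : ℝ) 1 ∂P ≤ q :=
  selective_seqstep_fdr_control_general P c q hc0 hc1 hq0 p hp H0 ν hν hindep
end

section
/- Let D be a positive definite d×d diagonal matrix and Σ a positive definite d×d matrix, and let κ ≥ 1. Then ((κ+1)/κ)·C − D is positive definite, where C = 2D − DΣ^{-1}D, if and only if ((κ+2)/(κ+1))·Σ − D is positive definite. -/
/-!
With `c = (κ+2)/(κ+1)`, the matrix `((κ+1)/κ)(2D - DΣ⁻¹D) - D` equals `((κ+2)/κ)(D - D(cΣ)⁻¹D)`.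
Both `D - D(cΣ)⁻¹D` and `cΣ - D` are Schur complements of the symmetric block matrix
`[[cΣ, D], [D, D]]`, and with a positive definite pivot a Schur complement is positive definite
exactly when the whole block matrix is.
-/

open Matrix
open scoped ComplexOrder

namespace Matrix

variable {𝕜 : Type*} [RCLike 𝕜] {m n : Type*}

theorem posDef_smul_iff {M : Matrix n n 𝕜} {r : ℝ} (hr : 0 < r) :
    (r • M).PosDef ↔ M.PosDef := by
  refine ⟨fun h => ?_, fun h => h.smul hr⟩
  simpa [smul_smul, inv_mul_cancel₀ hr.ne'] using h.smul (inv_pos.mpr hr)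

variable [Fintype m] [Fintype n] [DecidableEq m] [DecidableEq n]

theorem posDef_iff_of_posSemidef_iff_of_det_eq_mul {M : Matrix m m 𝕜} {N : Matrix n n 𝕜}
    (hsemi : M.PosSemidef ↔ N.PosSemidef) {c : 𝕜} (hc : c ≠ 0) (hdet : M.det = c * N.det) :
    M.PosDef ↔ N.PosDef := by
  refine ⟨fun hM => ?_, fun hN => ?_⟩
  · rw [(hsemi.mp hM.posSemidef).posDef_iff_det_ne_zero]
    exact right_ne_zero_of_mul (hdet ▸ hM.det_pos.ne')
  · rw [(hsemi.mpr hN.posSemidef).posDef_iff_det_ne_zero, hdet]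
    exact mul_ne_zero hc hN.det_pos.ne'

theorem PosDef.posDef_fromBlocks₁₁_iff {A : Matrix m m 𝕜} (B : Matrix m n 𝕜) (D : Matrix n n 𝕜)
    (hA : A.PosDef) [Invertible A] :
    (fromBlocks A B Bᴴ D).PosDef ↔ (D - Bᴴ * A⁻¹ * B).PosDef :=
  posDef_iff_of_posSemidef_iff_of_det_eq_mul (hA.fromBlocks₁₁ B D) hA.det_pos.ne'
    (by rw [det_fromBlocks₁₁, invOf_eq_nonsing_inv])

theorem PosDef.posDef_fromBlocks₂₂_iff (A : Matrix m m 𝕜) (B : Matrix m n 𝕜) {D : Matrix n n 𝕜}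
    (hD : D.PosDef) [Invertible D] :
    (fromBlocks A B Bᴴ D).PosDef ↔ (A - B * D⁻¹ * Bᴴ).PosDef :=
  posDef_iff_of_posSemidef_iff_of_det_eq_mul (hD.fromBlocks₂₂ A B) hD.det_pos.ne'
    (by rw [det_fromBlocks₂₂, invOf_eq_nonsing_inv])

theorem PosDef.posDef_sub_mul_inv_mul_iff {T D : Matrix n n 𝕜} (hT : T.PosDef) (hD : D.PosDef) :
    (D - D * T⁻¹ * D).PosDef ↔ (T - D).PosDef := by
  have := hT.isUnit.invertible
  have := hD.isUnit.invertible
  have hDH : Dᴴ = D := hD.isHermitian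
  have h₁₁ := hT.posDef_fromBlocks₁₁_iff D D
  have h₂₂ := hD.posDef_fromBlocks₂₂_iff T D
  rw [hDH] at h₁₁ h₂₂
  rw [← h₁₁, h₂₂, mul_inv_of_invertible, one_mul]

end Matrix

/-- Key inductive step for the positive definiteness of the multi-knockoff covariance:
with `C = 2D - D Σ⁻¹ D`, the matrix `((κ+1)/κ) • C - D` is positive definite iff
`((κ+2)/(κ+1)) • Σ - D` is positive definite. -/
theorem posDef_step {d : ℕ} (κ : ℕ) (hκ : 1 ≤ κ)
    (S : Matrix (Fin d) (Fin d) ℝ) (s : Fin d → ℝ)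
    (hS : S.PosDef) (hD : (Matrix.diagonal s).PosDef) :
    ((((κ : ℝ) + 1) / κ) • ((2 : ℝ) • Matrix.diagonal s
        - Matrix.diagonal s * S⁻¹ * Matrix.diagonal s)
      - Matrix.diagonal s).PosDef
    ↔ ((((κ : ℝ) + 2) / ((κ : ℝ) + 1)) • S - Matrix.diagonal s).PosDef := by
  set D := Matrix.diagonal s
  set c : ℝ := ((κ : ℝ) + 2) / ((κ : ℝ) + 1)
  have hκ₀ : (0 : ℝ) < κ := by exact_mod_cast hκ
  have hc : 0 < c := by positivity
  have hcS : (c • S)⁻¹ = c⁻¹ • S⁻¹ :=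
    inv_smul' S (Units.mk0 c hc.ne') ((isUnit_iff_isUnit_det S).mp hS.isUnit)
  have hrescale : (((κ : ℝ) + 1) / κ) • ((2 : ℝ) • D - D * S⁻¹ * D) - D
      = (((κ : ℝ) + 2) / κ) • (D - D * (c • S)⁻¹ * D) := by
    rw [hcS, Matrix.mul_smul, Matrix.smul_mul]
    match_scalars
    · field_simp
      ring
    · simp only [c]
      field_simp
  rw [hrescale, posDef_smul_iff (by positivity), (hS.smul hc).posDef_sub_mul_inv_mul_iff hD]
end
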